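/- Let h : X → Y be a continuous injection from a compact metrizable space X into a metrizable space Y, and let L ⊆ X be such that L = ⋂_{n} A_n where each A_n is Fσ in X. Then h(L) ∪ (Y \ h(X)) is a countable intersection of Fσ subsets of Y (i.e., a Π⁰₃ subset of Y). -/
import Mathlib


/-- A set is Σ⁰₂ (Fσ) if it is a countable union of closed sets. -/
def IsFsigma {X : Type*} [TopologicalSpace X] (S : Set X) : Prop :=
  ∃ f : ℕ → Set X, (∀ n, IsClosed (f n)) ∧ S = ⋃ n, f n

/-- A set is Π⁰₃ if it is a countable intersection of Σ⁰₂ (Fσ) sets. -/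
def IsPiThree {X : Type*} [TopologicalSpace X] (S : Set X) : Prop :=
  ∃ f : ℕ → Set X, (∀ n, IsFsigma (f n)) ∧ S = ⋂ n, f n

lemma isFsigma_union {Y : Type*} [TopologicalSpace Y] {S T : Set Y}
    (hS : IsFsigma S) (hT : IsFsigma T) : IsFsigma (S ∪ T) := by
  obtain ⟨f, hf, rfl⟩ := hS
  obtain ⟨g, hg, rfl⟩ := hT
  refine ⟨fun n => f n ∪ g n, fun n => (hf n).union (hg n), ?_⟩
  ext y
  simp only [Set.mem_union, Set.mem_iUnion]
  constructor
  · rintro (⟨n, hn⟩ | ⟨n, hn⟩)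
    exacts [⟨n, Or.inl hn⟩, ⟨n, Or.inr hn⟩]
  · rintro ⟨n, hn | hn⟩
    exacts [Or.inl ⟨n, hn⟩, Or.inr ⟨n, hn⟩]

lemma isFsigma_of_isOpen {Y : Type*} [TopologicalSpace Y]
    [TopologicalSpace.MetrizableSpace Y] {U : Set Y} (hU : IsOpen U) :
    IsFsigma U := by
  letI := TopologicalSpace.metrizableSpaceMetric Y
  rcases Set.eq_empty_or_nonempty Uᶜ with he | hne
  · exact ⟨fun _ => Set.univ, fun _ => isClosed_univ, by
      rw [Set.compl_empty_iff.mp he, Set.iUnion_const]⟩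
  refine ⟨fun n => {y | (n + 1 : ℝ)⁻¹ ≤ Metric.infDist y Uᶜ}, fun n => ?_, ?_⟩
  · exact isClosed_le continuous_const (Metric.continuous_infDist_pt _)
  · ext y
    simp only [Set.mem_iUnion, Set.mem_setOf_eq]
    constructor
    · intro hy
      have hpos : 0 < Metric.infDist y Uᶜ := by
        exact (hU.isClosed_compl.notMem_iff_infDist_pos hne).1 (by simpa using hy)
      obtain ⟨n, hn⟩ := exists_nat_one_div_lt hpos
      exact ⟨n, by rw [one_div] at hn; linarith⟩
    · rintro ⟨n, hn⟩
      by_contra hy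
      have : Metric.infDist y Uᶜ = 0 :=
        Metric.infDist_zero_of_mem (by simpa using hy)
      have : (0:ℝ) < (n + 1 : ℝ)⁻¹ := by positivity
      linarith
theorem stmt11 {X Y : Type*} [TopologicalSpace X] [TopologicalSpace Y]
    [CompactSpace X] [TopologicalSpace.MetrizableSpace X]
    [TopologicalSpace.MetrizableSpace Y]
    (h : X → Y) (hcont : Continuous h) (hinj : Function.Injective h)
    (A : ℕ → Set X) (hA : ∀ n, IsFsigma (A n)) (L : Set X) (hL : L = ⋂ n, A n) :
    IsPiThree (h '' L ∪ (Set.range h)ᶜ) := by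
  haveI : T2Space Y := TopologicalSpace.t2Space_of_metrizableSpace
  have himg : ∀ {C : Set X}, IsClosed C → IsClosed (h '' C) := fun hC =>
    (hC.isCompact.image hcont).isClosed
  have hRc : IsFsigma (Set.range h)ᶜ := by
    apply isFsigma_of_isOpen
    have : IsClosed (Set.range h) := by
      rw [← Set.image_univ]; exact himg isClosed_univ
    exact this.isOpen_compl
  have hFim : ∀ n, IsFsigma (h '' A n) := by
    intro n
    obtain ⟨f, hf, hfeq⟩ := hA n
    exact ⟨fun m => h '' f m, fun m => himg (hf m), by rw [hfeq, Set.image_iUnion]⟩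
  refine ⟨fun n => h '' A n ∪ (Set.range h)ᶜ,
    fun n => isFsigma_union (hFim n) hRc, ?_⟩
  rw [hL, hinj.injOn.image_iInter_eq, Set.iInter_union]
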